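/- In the metric space (𝓔, ℍ), every closed and bounded set is compact; in particular, (𝓔, ℍ) is locally compact (closed balls are compact). -/

import Mathlib

open Set Metric Filter

def hypo (f : ℝ → ℝ) : Set (EuclideanSpace ℝ (Fin 2)) :=
  {p | p 0 ∈ Set.Icc (0:ℝ) 1 ∧ 0 ≤ p 1 ∧ p 1 ≤ f (p 0)}

noncomputable def HH (f g : ℝ → ℝ) : ℝ := Metric.hausdorffDist (hypo f) (hypo g)

def memE (f : ℝ → ℝ) : Prop :=
  (∀ x ∈ Set.Icc (0:ℝ) 1, 0 ≤ f x) ∧ UpperSemicontinuousOn f (Set.Icc (0:ℝ) 1)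

/-!
Hypographs of elements of `𝓔` are nonempty compact subsets of `ℝ²`, and `ℍ`-boundedness of `A`
puts all of them inside one compact set, a closed thickening of a fixed hypograph. By Blaschke's
selection theorem (the nonempty compact subsets of a compact set form a compact space for the
Hausdorff metric) a subsequence of hypographs converges to a compact set `K`. Hausdorff limits of
hypographs still contain the base segment `[0,1] × {0}`, lie in the strip `[0,1] × [0,∞)` and are
closed under lowering points, so `K = hypo F` for `F x = sup {y | (x, y) ∈ K}`; since `K` is
closed, `F` is upper semicontinuous, and closedness of `A` puts `F` in `A`.
-/

open scoped ENNReal Topology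
open TopologicalSpace (NonemptyCompacts)

local notation "ℝ²" => EuclideanSpace ℝ (Fin 2)

theorem exists_subseq_tendsto_hausdorffEDist {α : Type*} [EMetricSpace α] {C : Set α}
    (hC : IsCompact C) {s : ℕ → Set α} (hs : ∀ n, IsCompact (s n))
    (hne : ∀ n, (s n).Nonempty) (hsC : ∀ n, s n ⊆ C) :
    ∃ K : Set α, IsCompact K ∧ ∃ φ : ℕ → ℕ, StrictMono φ ∧
      Tendsto (fun n => hausdorffEDist (s (φ n)) K) atTop (𝓝 0) := by
  let v n : NonemptyCompacts α := ⟨⟨s n, hs n⟩, hne n⟩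
  obtain ⟨K, -, φ, hφ, hlim⟩ :=
    (NonemptyCompacts.isCompact_subsets_of_isCompact hC).tendsto_subseq (x := v) hsC
  exact ⟨K, K.isCompact, φ, hφ, tendsto_iff_edist_tendsto_0.1 hlim⟩

section HausdorffLimit

variable {α : Type*} {s : ℕ → Set α} {K : Set α}

theorem mem_of_tendsto_of_tendsto_hausdorffEDist [PseudoEMetricSpace α]
    (hlim : Tendsto (fun n => hausdorffEDist (s n) K) atTop (𝓝 0)) (hK : IsClosed K)
    {q : ℕ → α} (hq : ∀ n, q n ∈ s n) {p : α} (hqp : Tendsto q atTop (𝓝 p)) : p ∈ K := by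
  have hdist : Tendsto (fun n => infEDist (q n) K) atTop (𝓝 (infEDist p K)) :=
    (continuous_infEDist.tendsto p).comp hqp
  have hzero : infEDist p K = 0 :=
    le_antisymm (le_of_tendsto_of_tendsto' hdist hlim
      fun n => infEDist_le_hausdorffEDist_of_mem (hq n)) bot_le
  rwa [← hK.closure_eq, mem_closure_iff_infEDist_zero]

theorem exists_tendsto_of_tendsto_hausdorffEDist [PseudoMetricSpace α]
    (hlim : Tendsto (fun n => hausdorffEDist (s n) K) atTop (𝓝 0))
    (hne : ∀ n, (s n).Nonempty) {p : α} (hp : p ∈ K) :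
    ∃ q : ℕ → α, (∀ n, q n ∈ s n) ∧ Tendsto q atTop (𝓝 p) := by
  have hclose n : ∃ q ∈ s n, edist p q < infEDist p (s n) + (n : ℝ≥0∞)⁻¹ :=
    infEDist_lt_iff.1 (ENNReal.lt_add_right (infEDist_ne_top (hne n)) (by simp))
  choose q hqs hq using hclose
  refine ⟨q, hqs, tendsto_iff_edist_tendsto_0.2 ?_⟩
  have hbound n : edist (q n) p ≤ hausdorffEDist (s n) K + (n : ℝ≥0∞)⁻¹ := by
    rw [edist_comm, hausdorffEDist_comm]
    exact (hq n).le.trans (by gcongr; exact infEDist_le_hausdorffEDist_of_mem hp)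
  have hsum : Tendsto (fun n : ℕ => hausdorffEDist (s n) K + (n : ℝ≥0∞)⁻¹) atTop (𝓝 0) := by
    simpa using hlim.add ENNReal.tendsto_inv_nat_nhds_zero
  exact tendsto_of_tendsto_of_tendsto_of_le_of_le tendsto_const_nhds hsum (fun _ => bot_le) hbound

end HausdorffLimit

theorem euclideanSpace_two_eta (p : ℝ²) : !₂[p 0, p 1] = p := by
  ext i; fin_cases i <;> simp

section Hypograph

variable {f : ℝ → ℝ}

theorem isClosed_hypo (hf : UpperSemicontinuousOn f (Icc 0 1)) : IsClosed (hypo f) := by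
  have hsplit : hypo f = (fun p : ℝ² => (p 0, p 1)) ⁻¹'
      {q : ℝ × ℝ | q.1 ∈ Icc 0 1 ∧ q.2 ≤ f q.1} ∩ {p | 0 ≤ p 1} := by
    ext p
    simp only [hypo, mem_ofPred_eq, mem_inter_iff, mem_preimage]
    tauto
  rw [hsplit]
  exact (((upperSemicontinuousOn_iff_isClosed_hypograph isClosed_Icc).1 hf).preimage
    (by fun_prop)).inter (isClosed_le continuous_const (by fun_prop))

theorem upperSemicontinuousOn_of_isClosed_hypo (hf : ∀ x ∈ Icc (0:ℝ) 1, 0 ≤ f x)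
    (h : IsClosed (hypo f)) : UpperSemicontinuousOn f (Icc 0 1) := by
  intro x hx y hxy
  have hopen : IsOpen {x' : ℝ | !₂[x', y] ∉ hypo f} :=
    (h.preimage (by fun_prop : Continuous fun x' : ℝ => !₂[x', y])).isOpen_compl
  have hxmem : !₂[x, y] ∉ hypo f := by simp [hypo, hxy]
  filter_upwards [nhdsWithin_le_nhds (hopen.mem_nhds hxmem), self_mem_nhdsWithin]
    with x' hx' hx'I
  have hy : 0 ≤ y := (hf x hx).trans hxy.le
  simp only [hypo, mem_ofPred_eq, not_and, not_le] at hx'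
  simpa [hy] using hx' (by simpa using hx'I)

theorem memE.isCompact_hypo (hf : memE f) : IsCompact (hypo f) := by
  obtain ⟨M, hM⟩ := hf.2.bddAbove_of_isCompact isCompact_Icc
  have hbox : hypo f ⊆ (fun q : ℝ × ℝ => !₂[q.1, q.2]) '' (Icc 0 1 ×ˢ Icc 0 M) :=
    fun p ⟨hp0, hp1, hpf⟩ =>
      ⟨(p 0, p 1), ⟨hp0, hp1, hpf.trans (hM ⟨_, hp0, rfl⟩)⟩, euclideanSpace_two_eta p⟩
  exact ((isCompact_Icc.prod isCompact_Icc).image (by fun_prop)).of_isClosed_subset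
    (isClosed_hypo hf.2) hbox

theorem memE.hypo_nonempty (hf : memE f) : (hypo f).Nonempty :=
  ⟨!₂[0, 0], by simpa [hypo] using hf.1 0 (by simp)⟩

end Hypograph

theorem memE.hausdorffEDist_hypo_ne_top {f g : ℝ → ℝ} (hf : memE f) (hg : memE g) :
    hausdorffEDist (hypo f) (hypo g) ≠ ⊤ :=
  hausdorffEDist_ne_top_of_nonempty_of_bounded hf.hypo_nonempty hg.hypo_nonempty
    hf.isCompact_hypo.isBounded hg.isCompact_hypo.isBounded

theorem hypo_subset_cthickening {f g : ℝ → ℝ} (hf : memE f) (hg : memE g) {r : ℝ}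
    (h : HH f g ≤ r) : hypo f ⊆ cthickening r (hypo g) := fun _ hp =>
  mem_cthickening_iff.2 <| (infEDist_le_hausdorffEDist_of_mem hp).trans <|
    (ENNReal.le_ofReal_iff_toReal_le (hf.hausdorffEDist_hypo_ne_top hg)
      (hausdorffDist_nonneg.trans h)).2 h

theorem exists_memE_hypo_eq {K : Set ℝ²} (hK : IsCompact K)
    (hbase : ∀ x ∈ Icc (0:ℝ) 1, !₂[x, 0] ∈ K)
    (hstrip : ∀ p ∈ K, p 0 ∈ Icc (0:ℝ) 1 ∧ 0 ≤ p 1)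
    (hdown : ∀ p ∈ K, ∀ y ∈ Icc 0 (p 1), !₂[p 0, y] ∈ K) : ∃ F, memE F ∧ hypo F = K := by
  let S x : Set ℝ := {y | !₂[x, y] ∈ K}
  have hS_bdd x : BddAbove (S x) := by
    refine (hK.image (by fun_prop : Continuous fun p : ℝ² => p 1)).bddAbove.mono ?_
    exact fun y hy => ⟨_, hy, by simp⟩
  have hS_closed x : IsClosed (S x) := hK.isClosed.preimage (by fun_prop)
  have hF_mem x (hx : x ∈ Icc (0:ℝ) 1) : !₂[x, sSup (S x)] ∈ K :=
    (hS_closed x).csSup_mem ⟨0, hbase x hx⟩ (hS_bdd x)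
  have hypo_eq : hypo (fun x => sSup (S x)) = K := by
    refine Subset.antisymm (fun p ⟨hp0, hp1, hpF⟩ => ?_) fun p hp => ?_
    · simpa [euclideanSpace_two_eta] using hdown _ (hF_mem _ hp0) (p 1) ⟨hp1, by simpa using hpF⟩
    · refine ⟨(hstrip p hp).1, (hstrip p hp).2, le_csSup (hS_bdd _) ?_⟩
      simpa [S, euclideanSpace_two_eta] using hp
  have hF0 x (hx : x ∈ Icc (0:ℝ) 1) : 0 ≤ sSup (S x) := le_csSup (hS_bdd x) (hbase x hx)
  exact ⟨_, ⟨hF0, upperSemicontinuousOn_of_isClosed_hypo hF0 (hypo_eq ▸ hK.isClosed)⟩, hypo_eq⟩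

section HypoLimit

variable {f : ℕ → ℝ → ℝ} {K : Set ℝ²}

theorem base_mem_of_tendsto_hypo
    (hlim : Tendsto (fun n => hausdorffEDist (hypo (f n)) K) atTop (𝓝 0))
    (hf : ∀ n, memE (f n)) (hK : IsClosed K) {x : ℝ} (hx : x ∈ Icc (0:ℝ) 1) : !₂[x, 0] ∈ K :=
  mem_of_tendsto_of_tendsto_hausdorffEDist hlim hK (q := fun _ => !₂[x, 0])
    (fun n => by simpa [hypo, hx.1, hx.2] using (hf n).1 x hx) tendsto_const_nhds

theorem mem_strip_of_tendsto_hypo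
    (hlim : Tendsto (fun n => hausdorffEDist (hypo (f n)) K) atTop (𝓝 0))
    (hf : ∀ n, memE (f n)) {p : ℝ²} (hp : p ∈ K) : p 0 ∈ Icc (0:ℝ) 1 ∧ 0 ≤ p 1 := by
  obtain ⟨q, hq, hqp⟩ :=
    exists_tendsto_of_tendsto_hausdorffEDist hlim (fun n => (hf n).hypo_nonempty) hp
  have hstrip : IsClosed {p : ℝ² | p 0 ∈ Icc (0:ℝ) 1 ∧ 0 ≤ p 1} :=
    (isClosed_Icc.preimage (by fun_prop : Continuous fun p : ℝ² => p 0)).inter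
      (isClosed_le continuous_const (by fun_prop : Continuous fun p : ℝ² => p 1))
  exact hstrip.mem_of_tendsto hqp (Eventually.of_forall fun n => ⟨(hq n).1, (hq n).2.1⟩)

theorem lower_mem_of_tendsto_hypo
    (hlim : Tendsto (fun n => hausdorffEDist (hypo (f n)) K) atTop (𝓝 0))
    (hf : ∀ n, memE (f n)) (hK : IsClosed K) {p : ℝ²} (hp : p ∈ K) {y : ℝ}
    (hy : y ∈ Icc 0 (p 1)) : !₂[p 0, y] ∈ K := by
  obtain ⟨q, hq, hqp⟩ :=
    exists_tendsto_of_tendsto_hausdorffEDist hlim (fun n => (hf n).hypo_nonempty) hp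
  let lower (r : ℝ²) : ℝ² := !₂[r 0, min y (r 1)]
  have hlower : Tendsto (fun n => lower (q n)) atTop (𝓝 (lower p)) :=
    ((by fun_prop : Continuous lower).tendsto p).comp hqp
  refine (by simp [lower, hy.2] : lower p = !₂[p 0, y]) ▸
    mem_of_tendsto_of_tendsto_hausdorffEDist hlim hK (fun n => ?_) hlower
  obtain ⟨hq0, hq1, hqf⟩ := hq n
  simp [lower, hypo, hq0.1, hq0.2, hy.1, hq1, hqf]

theorem exists_memE_hypo_eq_of_tendsto
    (hlim : Tendsto (fun n => hausdorffEDist (hypo (f n)) K) atTop (𝓝 0))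
    (hf : ∀ n, memE (f n)) (hK : IsCompact K) : ∃ F, memE F ∧ hypo F = K :=
  exists_memE_hypo_eq hK (fun _ => base_mem_of_tendsto_hypo hlim hf hK.isClosed)
    (fun _ => mem_strip_of_tendsto_hypo hlim hf)
    (fun _ hp _ => lower_mem_of_tendsto_hypo hlim hf hK.isClosed hp)

end HypoLimit

/-- In `(𝓔, ℍ)`, every `ℍ`-closed and `ℍ`-bounded set is (sequentially)
compact: every sequence in such a set has a subsequence converging in `ℍ` to an
element of the set. In particular closed balls are compact and `(𝓔, ℍ)` is
locally compact. -/
theorem stmt_12 (A : Set (ℝ → ℝ)) (hA : ∀ f ∈ A, memE f)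
    (hbdd : ∃ (g : ℝ → ℝ) (r : ℝ), memE g ∧ ∀ f ∈ A, HH f g ≤ r)
    (hclosed : ∀ u : ℕ → ℝ → ℝ, (∀ n, u n ∈ A) → ∀ f : ℝ → ℝ, memE f →
      Filter.Tendsto (fun n => HH (u n) f) Filter.atTop (nhds 0) → f ∈ A) :
    ∀ u : ℕ → ℝ → ℝ, (∀ n, u n ∈ A) →
      ∃ f ∈ A, ∃ φ : ℕ → ℕ, StrictMono φ ∧
        Filter.Tendsto (fun n => HH (u (φ n)) f) Filter.atTop (nhds 0) := by
  intro u hu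
  obtain ⟨g, r, hg, hr⟩ := hbdd
  obtain ⟨K, hK, φ, hφ, hlim⟩ := exists_subseq_tendsto_hausdorffEDist
    (hg.isCompact_hypo.cthickening (r := r)) (fun n => (hA _ (hu n)).isCompact_hypo)
    (fun n => (hA _ (hu n)).hypo_nonempty)
    (fun n => hypo_subset_cthickening (hA _ (hu n)) hg (hr _ (hu n)))
  obtain ⟨F, hF, rfl⟩ := exists_memE_hypo_eq_of_tendsto hlim (fun n => hA _ (hu (φ n))) hK
  have hconv : Tendsto (fun n => HH (u (φ n)) F) atTop (𝓝 0) := by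
    simpa [HH, hausdorffDist, Function.comp_def] using
      (ENNReal.tendsto_toReal ENNReal.zero_ne_top).comp hlim
  exact ⟨F, hclosed _ (fun n => hu (φ n)) F hF hconv, φ, hφ, hconv⟩
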